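/- arXiv:2207.08300 — 2 statements merged into one kernel-verified Lean document; each statement's English description precedes it below -/
import Mathlib

section
/- The shuffle product distributes over the multiplicative mixed composition product from the left: for c, d ∈ ℝ⟨⟨X⟩⟩ and e ∈ ℝ^m⟨⟨X⟩⟩, one has (c ⧢ d) ∘̄ δ_e = (c ∘̄ δ_e) ⧢ (d ∘̄ δ_e), where ∘̄ denotes the multiplicative mixed composition product. -/
open scoped BigOperators

namespace FPS

/-- A (noncommutative) formal power series over alphabet `X` is a map from words to `ℝ`. -/
abbrev Series (X : Type*) := List X → ℝ

noncomputable section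

variable {X : Type*} [DecidableEq X]

/-- The series `1·∅`. -/
def one : Series X := fun η => if η = [] then 1 else 0

/-- Cauchy (concatenation) product. -/
def cauchy (c d : Series X) : Series X := fun η =>
  ∑ i ∈ Finset.range (η.length + 1), c (η.take i) * d (η.drop i)

/-- Shuffle product. -/
def sh (c d : Series X) : List X → ℝ
  | [] => c [] * d []
  | x :: t => sh (fun w => c (x :: w)) d t + sh c (fun w => d (x :: w)) t

/-- Cauchy powers. -/
def cpow (c : Series X) : ℕ → Series X
  | 0 => one
  | k + 1 => cauchy c (cpow c k)

/-- Shuffle powers. -/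
def shpow (c : Series X) : ℕ → Series X
  | 0 => one
  | k + 1 => sh c (shpow c k)

/-- The proper series `1 - s/(s,∅)` entering the inverse formulas (negated proper part of `s/(s,∅)`). -/
def sprime (s : Series X) : Series X := fun w => if w = [] then 0 else - (s w / s [])

/-- Cauchy inverse `(s,∅)⁻¹ Σ_k (s')^k` of a purely improper series. -/
def cInv (s : Series X) : Series X := fun η =>
  (s [])⁻¹ * ∑ k ∈ Finset.range (η.length + 1), cpow (sprime s) k η

/-- Shuffle inverse `(s,∅)⁻¹ Σ_k (s')^{⧢k}` of a purely improper series. -/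
def shInv (s : Series X) : Series X := fun η =>
  (s [])⁻¹ * ∑ k ∈ Finset.range (η.length + 1), shpow (sprime s) k η

/-- The order: minimal length of a word in the support (`⊤` for the zero series). -/
def ord (c : Series X) : ℕ∞ := sInf ((fun η : List X => (η.length : ℕ∞)) '' {η | c η ≠ 0})

/-- `σ^n` with `σ^⊤ = 0`. -/
def powE (σ : ℝ) : ℕ∞ → ℝ := fun n => if n = ⊤ then 0 else σ ^ n.toNat

/-- The ultrametric `κ(c,d) = σ^{ord(c-d)}`. -/
def kappa (σ : ℝ) (c d : Series X) : ℝ := powE σ (ord (c - d))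

/-- Order of a vector of series (minimum over components). -/
def ordV {n : ℕ} (c : Fin n → Series X) : ℕ∞ := ⨅ i, ord (c i)

/-- Ultrametric on vectors of series. -/
def kappaV (σ : ℝ) {n : ℕ} (c d : Fin n → Series X) : ℝ := powE σ (ordV (c - d))

/-- Proper part `c - (c,∅)∅`. -/
def properPart (c : Series X) : Series X := fun w => if w = [] then 0 else c w

/-- Left concatenation by a letter: `x·s`. -/
def leftc (x : X) (s : Series X) : Series X := fun η =>
  match η with
  | [] => 0
  | y :: t => if y = x then s t else 0

end

noncomputable section

/-- `φ̄_d(η)` : the algebra homomorphism defining the multiplicative mixed composition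
product, with `φ̄_d(x_0)(w) = x_0 w` and `φ̄_d(x_i)(w) = x_i (d_i ⧢ w)`. -/
def phiWord {m : ℕ} (d : Fin m → Series (Fin (m + 1))) :
    List (Fin (m + 1)) → Series (Fin (m + 1)) → Series (Fin (m + 1))
  | [], w => w
  | i :: t, w =>
      Fin.cases (leftc 0 (phiWord d t w)) (fun j => leftc j.succ (sh (d j) (phiWord d t w))) i

/-- Multiplicative mixed composition product `c ∘̄ δ_d = Σ_η (c,η) φ̄_d(η)(1)`. -/
def mix {m : ℕ} (c : Series (Fin (m + 1))) (d : Fin m → Series (Fin (m + 1))) :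
    Series (Fin (m + 1)) := fun η =>
  ∑ k ∈ Finset.range (η.length + 1),
    ∑ v : List.Vector (Fin (m + 1)) k, c v.toList * phiWord d v.toList one η

/-- `ψ_e(η)` : the algebra homomorphism defining the composition product, with
`ψ_e(x'_i)(w) = x_0 (e_i ⧢ w)`, `e_0 = 1∅`. -/
def psiWord {ℓ m : ℕ} (e : Fin ℓ → Series (Fin (m + 1))) :
    List (Fin (ℓ + 1)) → Series (Fin (m + 1)) → Series (Fin (m + 1))
  | [], w => w
  | i :: t, w => leftc 0 (sh (Fin.cases one e i) (psiWord e t w))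

/-- Composition product `c ∘ e = Σ_η (c,η) ψ_e(η)(1)`. -/
def comp {ℓ m : ℕ} (c : Series (Fin (ℓ + 1))) (e : Fin ℓ → Series (Fin (m + 1))) :
    Series (Fin (m + 1)) := fun η =>
  ∑ k ∈ Finset.range (η.length + 1),
    ∑ v : List.Vector (Fin (ℓ + 1)) k, c v.toList * psiWord e v.toList one η

/-- The multiplicative composition product on `δ`-series:
`δ_c ∘ δ_d = δ_{d ⧢ (c ∘̄ δ_d)}`, expressed on the underlying series. -/
def star {m : ℕ} (c d : Fin m → Series (Fin (m + 1))) : Fin m → Series (Fin (m + 1)) :=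
  fun i => sh (d i) (mix (c i) d)

/-- The all-ones series vector (generating series of the identity `δ_1`). -/
def oneV {X : Type*} [DecidableEq X] (m : ℕ) : Fin m → Series X := fun _ => one

open Classical in
/-- The inverse `d^{∘-1}` in the multiplicative dynamic output feedback group: the unique
solution of `e = d^{⧢-1} ∘̄ δ_e`. -/
def dynInv {m : ℕ} (d : Fin m → Series (Fin (m + 1))) : Fin m → Series (Fin (m + 1)) :=
  if h : ∃ e : Fin m → Series (Fin (m + 1)), e = fun i => mix (shInv (d i)) e then h.choose
  else oneV m

/-- Shuffle power of a family: `c^{⧢n} = c_1^{⧢n_1} ⧢ ⋯ ⧢ c_ℓ^{⧢n_ℓ}`. -/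
def shFam {X : Type*} [DecidableEq X] {ℓ : ℕ} (c : Fin ℓ → Series X) (n : Fin ℓ →₀ ℕ) :
    Series X :=
  (List.finRange ℓ).foldr (fun i acc => sh (shpow (c i) (n i)) acc) one

/-- Wiener-Fliess composition product `d ∘̂ c = Σ_{η∈X̃*} (d,η) c^{⧢η}` of a commutative
series `d` with a (proper) noncommutative series vector `c`. -/
def wf {X : Type*} [DecidableEq X] {ℓ : ℕ} (d : MvPowerSeries (Fin ℓ) ℝ)
    (c : Fin ℓ → Series X) : Series X := fun η =>
  ∑ n ∈ Finset.Iic (Finsupp.equivFunOnFinite.symm fun _ : Fin ℓ => η.length),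
    MvPowerSeries.coeff n d * shFam c n η

end

/-! A series is determined by its constant term and its left shifts `x⁻¹c : w ↦ (c, x w)`.
The shift is a derivation of the shuffle product, `x⁻¹(a ⧢ b) = x⁻¹a ⧢ b + a ⧢ x⁻¹b`, and the
recursion defining `φ̄_e` gives `x⁻¹(c ∘̄ δ_e) = e_x ⧢ (x⁻¹c ∘̄ δ_e)` with `e_{x₀} = 1`. As the
shuffle algebra is commutative and associative, shuffling by `e_x` moves onto either factor of
`(c ∘̄ δ_e) ⧢ (d ∘̄ δ_e)`, so both sides of the identity have the same shifts, and induction on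
the length of words concludes. -/

section Shuffle

variable {X : Type*}

def leftShift (x : X) : Series X →ₗ[ℝ] Series X := LinearMap.funLeft ℝ ℝ (List.cons x)

theorem sh_nil (a b : Series X) : sh a b [] = a [] * b [] := rfl

theorem sh_cons (a b : Series X) (x : X) (t : List X) :
    sh a b (x :: t) = sh (leftShift x a) b t + sh a (leftShift x b) t := rfl

theorem leftShift_sh (x : X) (a b : Series X) :
    leftShift x (sh a b) = sh (leftShift x a) b + sh a (leftShift x b) := rfl

theorem sh_comm (a b : Series X) : sh a b = sh b a := by
  funext η
  induction η generalizing a b with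
  | nil => exact mul_comm _ _
  | cons x t ih => rw [sh_cons, sh_cons, ih, ih (leftShift x b)]; ring

theorem sh_add (a b b' : Series X) : sh a (b + b') = sh a b + sh a b' := by
  funext η
  induction η generalizing a b b' with
  | nil => exact mul_add _ _ _
  | cons x t ih =>
    simp only [Pi.add_apply, sh_cons, map_add] at ih ⊢
    rw [ih, ih]
    ring

theorem sh_smul (a : Series X) (r : ℝ) (b : Series X) : sh a (r • b) = r • sh a b := by
  funext η
  induction η generalizing a b with
  | nil => exact mul_left_comm _ _ _
  | cons x t ih =>
    simp only [Pi.smul_apply, smul_eq_mul, sh_cons, map_smul] at ih ⊢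
    rw [ih, ih]
    ring

theorem add_sh (a a' b : Series X) : sh (a + a') b = sh a b + sh a' b := by
  rw [sh_comm, sh_add, sh_comm b, sh_comm b]

def shₗ (a : Series X) : Series X →ₗ[ℝ] Series X where
  toFun := sh a
  map_add' := sh_add a
  map_smul' := sh_smul a

theorem sh_zero (a : Series X) : sh a 0 = 0 := (shₗ a).map_zero

theorem zero_sh (b : Series X) : sh 0 b = 0 := by rw [sh_comm, sh_zero]

theorem leftShift_one (x : X) : leftShift x (one : Series X) = 0 := by
  funext w
  simp [leftShift, one]

theorem leftShift_leftc [DecidableEq X] (x i : X) (f : Series X) :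
    leftShift x (leftc i f) = if x = i then f else 0 := by
  funext t
  by_cases h : x = i <;> simp [leftShift, leftc, h]

theorem one_sh (b : Series X) : sh one b = b := by
  funext η
  induction η generalizing b with
  | nil => simp [sh_nil, one]
  | cons x t ih => rw [sh_cons, leftShift_one, zero_sh, ih, Pi.zero_apply, zero_add]; rfl

theorem sh_assoc (a b c : Series X) : sh (sh a b) c = sh a (sh b c) := by
  funext η
  induction η generalizing a b c with
  | nil => exact mul_assoc _ _ _
  | cons x t ih =>
    rw [sh_cons, sh_cons, leftShift_sh, leftShift_sh, add_sh, sh_add]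
    simp only [Pi.add_apply, ih]
    ring

theorem sh_left_comm (a b c : Series X) : sh a (sh b c) = sh b (sh a c) := by
  rw [← sh_assoc, sh_comm a b, sh_assoc]

theorem sh_apply_congr {a b b' : Series X} {η : List X}
    (h : ∀ w : List X, w.length ≤ η.length → b w = b' w) : sh a b η = sh a b' η := by
  induction η generalizing a b b' with
  | nil => rw [sh_nil, sh_nil, h [] le_rfl]
  | cons x t ih =>
    rw [sh_cons, sh_cons]
    congr 1
    · exact ih fun w hw => h w (hw.trans (Nat.le_succ _))
    · exact ih fun w hw => h (x :: w) (Nat.succ_le_succ hw)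

end Shuffle

theorem _root_.List.Vector.sum_succ {α M : Type*} [Fintype α] [AddCommMonoid M] {k : ℕ}
    (f : List.Vector α (k + 1) → M) :
    ∑ v, f v = ∑ a, ∑ v : List.Vector α k, f (a ::ᵥ v) := by
  rw [← Fintype.sum_prod_type']
  let split : List.Vector α (k + 1) ≃ α × List.Vector α k :=
    ⟨fun v => (v.head, v.tail), fun p => p.1 ::ᵥ p.2, fun v => v.cons_head_tail, fun p => by simp⟩
  exact Fintype.sum_equiv split _ _ fun v => by simp [split]

section Mix

variable {m : ℕ} (e : Fin m → Series (Fin (m + 1)))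

/-- With `e₀ = 1`, the rule `φ̄_e(xᵢ)(w) = xᵢ (eᵢ ⧢ w)` also covers the letter `x₀`. -/
def consOne : Fin (m + 1) → Series (Fin (m + 1)) := Fin.cons one e

theorem phiWord_cons (i : Fin (m + 1)) (t : List (Fin (m + 1))) (w : Series (Fin (m + 1))) :
    phiWord e (i :: t) w = leftc i (sh (consOne e i) (phiWord e t w)) := by
  cases i using Fin.cases <;> simp [phiWord, consOne, one_sh]

theorem phiWord_one_apply_of_length_lt {u η : List (Fin (m + 1))} (h : η.length < u.length) :
    phiWord e u one η = 0 := by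
  induction u generalizing η with
  | nil => simp at h
  | cons i t ih =>
    cases η with
    | nil => simp [phiWord_cons, leftc]
    | cons y s =>
      change leftShift y (phiWord e (i :: t) one) s = 0
      rw [phiWord_cons, leftShift_leftc]
      split_ifs
      · rw [sh_apply_congr (b' := 0) fun w hw => ih (by simp at h; omega), sh_zero]
        rfl
      · rfl

/-- `mix` sums over `|v| ≤ |η|`, a bound depending on the word `η`; fixing the bound turns the sum
into a finite sum of series, on which `leftShift` acts termwise. -/
def mixTrunc (c : Series (Fin (m + 1))) (d : Fin m → Series (Fin (m + 1))) (N : ℕ) :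
    Series (Fin (m + 1)) :=
  ∑ k ∈ Finset.range (N + 1), ∑ v : List.Vector (Fin (m + 1)) k, c v.toList • phiWord d v.toList one

theorem mix_apply_eq_mixTrunc (c : Series (Fin (m + 1))) {η : List (Fin (m + 1))} {N : ℕ}
    (h : η.length ≤ N) : mix c e η = mixTrunc c e N η := by
  simp only [mix, mixTrunc, Finset.sum_apply, Pi.smul_apply, smul_eq_mul]
  refine Finset.sum_subset (Finset.range_subset_range.mpr (by omega)) fun k _ hk => ?_
  refine Finset.sum_eq_zero fun v _ => ?_
  rw [phiWord_one_apply_of_length_lt e (by simp at hk ⊢; omega), mul_zero]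

theorem leftShift_mixTrunc (x : Fin (m + 1)) (c : Series (Fin (m + 1))) (N : ℕ) :
    leftShift x (mixTrunc c e (N + 1)) = sh (consOne e x) (mixTrunc (leftShift x c) e N) := by
  change _ = shₗ (consOne e x) _
  simp only [mixTrunc, map_sum, map_smul]
  rw [Finset.sum_range_succ']
  -- the empty word contributes `x⁻¹1 = 0`, and of the words `i v` only those with `i = x` survive
  simp only [List.Vector.sum_succ, List.Vector.toList_cons, phiWord_cons, leftShift_leftc,
    smul_ite, smul_zero, Finset.sum_ite_irrel, Finset.sum_const_zero, Finset.sum_ite_eq,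
    Finset.mem_univ, ↓reduceIte, List.Vector.toList_empty, phiWord, leftShift_one, add_zero]
  rfl

theorem leftShift_mix (x : Fin (m + 1)) (c : Series (Fin (m + 1))) :
    leftShift x (mix c e) = sh (consOne e x) (mix (leftShift x c) e) := by
  funext t
  change mix c e (x :: t) = _
  rw [mix_apply_eq_mixTrunc e c (N := t.length + 1) (by simp)]
  change leftShift x (mixTrunc c e (t.length + 1)) t = _
  rw [leftShift_mixTrunc]
  exact sh_apply_congr fun w hw => (mix_apply_eq_mixTrunc e _ hw).symm

theorem mix_nil (c : Series (Fin (m + 1))) : mix c e [] = c [] := by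
  simp [mix, Fintype.sum_subsingleton _ List.Vector.nil, phiWord, one]

theorem mix_add (c c' : Series (Fin (m + 1))) : mix (c + c') e = mix c e + mix c' e := by
  funext η
  simp [mix, add_mul, Finset.sum_add_distrib]

theorem mix_sh_apply (c d : Series (Fin (m + 1))) :
    ∀ η, mix (sh c d) e η = sh (mix c e) (mix d e) η
  | [] => by rw [mix_nil, sh_nil, sh_nil, mix_nil, mix_nil]
  | x :: t => by
    have ih : ∀ w : List (Fin (m + 1)), w.length ≤ t.length → ∀ a b : Series (Fin (m + 1)),
        mix (sh a b) e w = sh (mix a e) (mix b e) w :=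
      fun w _ a b => mix_sh_apply a b w
    calc mix (sh c d) e (x :: t)
        = sh (consOne e x) (mix (leftShift x (sh c d)) e) t := congrFun (leftShift_mix e x _) t
      _ = sh (consOne e x) (mix (sh (leftShift x c) d) e + mix (sh c (leftShift x d)) e) t := by
        rw [leftShift_sh, mix_add]
      _ = sh (consOne e x)
          (sh (mix (leftShift x c) e) (mix d e) + sh (mix c e) (mix (leftShift x d) e)) t :=
        sh_apply_congr fun w hw => by simp only [Pi.add_apply, ih w hw]
      _ = (sh (leftShift x (mix c e)) (mix d e) + sh (mix c e) (leftShift x (mix d e))) t := by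
        rw [leftShift_mix, leftShift_mix, sh_add, ← sh_assoc, sh_left_comm (consOne e x)]
      _ = sh (mix c e) (mix d e) (x :: t) := rfl
termination_by η => η.length

end Mix

/-- The shuffle product distributes over the multiplicative mixed
composition product from the left: `(c ⧢ d) ∘̄ δ_e = (c ∘̄ δ_e) ⧢ (d ∘̄ δ_e)`. -/
theorem shuffle_distributes_over_mix (m : ℕ)
    (c d : Series (Fin (m + 1))) (e : Fin m → Series (Fin (m + 1))) :
    mix (sh c d) e = sh (mix c e) (mix d e) := by
  funext η
  exact mix_sh_apply e c d η

end FPS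
end

section
/- For any word η ∈ X* and series d, e ∈ ℝ^m⟨⟨X⟩⟩, the multiplicative mixed composition product satisfies κ(η ∘̄ δ_d, η ∘̄ δ_e) ≤ σ^{|η|} κ(d,e), where κ is the ultrametric on formal power series. -/
open scoped BigOperators

namespace FPS

/-! Left concatenation by a letter raises the order of a series by one, and the shuffle product
is superadditive for it: `ord a + ord b ≤ ord (a ⧢ b)`. Writing
`d_j ⧢ P - e_j ⧢ Q = (d_j - e_j) ⧢ P + e_j ⧢ (P - Q)`, induction on `η` gives
`|η| + ord (d - e) ≤ ord (φ̄_d(η)(w) - φ̄_e(η)(w))`, and the claim follows because `n ↦ σ^n` is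
antitone and turns sums of orders into products. -/

theorem _root_.ENat.lt_sub_one_add_of_add_one_lt {n : ℕ} {x y : ℕ∞} (h : (n : ℕ∞) + 1 < x + y) :
    (n : ℕ∞) < x - 1 + y := by
  induction x using ENat.recTopCoe with
  | top => simp
  | coe x =>
    induction y using ENat.recTopCoe with
    | top => simp
    | coe y => norm_cast at h ⊢; omega

section Series

variable {X : Type*}

theorem le_ord_iff {c : Series X} {n : ℕ∞} :
    n ≤ ord c ↔ ∀ w : List X, (w.length : ℕ∞) < n → c w = 0 := by
  simp only [ord, le_sInf_iff, Set.forall_mem_image, Set.mem_ofPred_eq]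
  exact forall_congr' fun w => not_imp_comm.trans (by rw [not_le])

theorem ord_le_length {c : Series X} {w : List X} (hw : c w ≠ 0) : ord c ≤ w.length :=
  sInf_le ⟨w, hw, rfl⟩

theorem min_ord_le_ord_add (a b : Series X) : min (ord a) (ord b) ≤ ord (a + b) :=
  le_ord_iff.mpr fun w hw => by
    rw [Pi.add_apply, le_ord_iff.mp (min_le_left _ _) w hw,
      le_ord_iff.mp (min_le_right _ _) w hw, add_zero]

theorem ord_sub_one_le_ord_cons (c : Series X) (x : X) :
    ord c - 1 ≤ ord (fun w => c (x :: w)) :=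
  le_ord_iff.mpr fun w hw => le_ord_iff.mp le_rfl (x :: w) (by
    rw [List.length_cons, Nat.cast_succ]
    exact lt_tsub_iff_right.mp hw)

theorem ord_add_one_le_ord_leftc [DecidableEq X] (x : X) (s : Series X) :
    ord s + 1 ≤ ord (leftc x s) := by
  refine le_ord_iff.mpr fun w hw => ?_
  match w with
  | [] => rfl
  | y :: t =>
    have ht : (t.length : ℕ∞) < ord s := by
      rwa [List.length_cons, Nat.cast_succ, ENat.add_lt_add_iff_right ENat.one_ne_top] at hw
    simp only [leftc, le_ord_iff.mp le_rfl t ht, ite_self]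

theorem leftc_sub [DecidableEq X] (x : X) (a b : Series X) :
    leftc x a - leftc x b = leftc x (a - b) := by
  funext w
  match w with
  | [] => simp [leftc]
  | y :: t => by_cases h : y = x <;> simp [leftc, h]

theorem sh_sub_left (a b c : Series X) : sh (a - b) c = sh a c - sh b c := by
  funext w
  induction w generalizing a b c with
  | nil => simp only [sh, Pi.sub_apply]; ring
  | cons x t ih =>
    simp only [sh, Pi.sub_apply] at ih ⊢
    rw [show (fun w => a (x :: w) - b (x :: w)) = (fun w => a (x :: w)) - fun w => b (x :: w)
      from rfl, ih, ih]
    ring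

theorem sh_sub_right (a b c : Series X) : sh a (b - c) = sh a b - sh a c := by
  funext w
  induction w generalizing a b c with
  | nil => simp only [sh, Pi.sub_apply]; ring
  | cons x t ih =>
    simp only [sh, Pi.sub_apply] at ih ⊢
    rw [show (fun w => b (x :: w) - c (x :: w)) = (fun w => b (x :: w)) - fun w => c (x :: w)
      from rfl, ih, ih]
    ring

theorem sh_sub_sh (a b c d : Series X) : sh a c - sh b d = sh (a - b) c + sh b (c - d) := by
  rw [sh_sub_left, sh_sub_right, sub_add_sub_cancel]

theorem sh_apply_eq_zero_of_length_lt (w : List X) (a b : Series X)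
    (hw : (w.length : ℕ∞) < ord a + ord b) : sh a b w = 0 := by
  induction w generalizing a b with
  | nil =>
    by_contra h
    obtain ⟨ha, hb⟩ := mul_ne_zero_iff.mp h
    have := add_le_add (ord_le_length ha) (ord_le_length hb)
    simp only [List.length_nil, Nat.cast_zero, add_zero] at this hw
    exact hw.not_ge this
  | cons x t ih =>
    rw [List.length_cons, Nat.cast_succ] at hw
    have hb : (t.length : ℕ∞) < ord a + ord (fun w => b (x :: w)) := by
      rw [add_comm (ord a)] at hw ⊢
      exact (ENat.lt_sub_one_add_of_add_one_lt hw).trans_le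
        (add_le_add_left (ord_sub_one_le_ord_cons b x) _)
    have ha : (t.length : ℕ∞) < ord (fun w => a (x :: w)) + ord b :=
      (ENat.lt_sub_one_add_of_add_one_lt hw).trans_le
        (add_le_add_left (ord_sub_one_le_ord_cons a x) _)
    rw [sh, ih _ _ ha, ih _ _ hb, add_zero]

theorem ord_add_ord_le_ord_sh (a b : Series X) : ord a + ord b ≤ ord (sh a b) :=
  le_ord_iff.mpr fun w hw => sh_apply_eq_zero_of_length_lt w a b hw

end Series

section Composition

variable {m : ℕ}

theorem ord_phiWord_cons (d : Fin m → Series (Fin (m + 1))) (i : Fin (m + 1))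
    (t : List (Fin (m + 1))) (w : Series (Fin (m + 1))) :
    ord (phiWord d t w) + 1 ≤ ord (phiWord d (i :: t) w) := by
  induction i using Fin.cases with
  | zero => exact ord_add_one_le_ord_leftc _ _
  | succ j =>
    refine le_trans ?_ (ord_add_one_le_ord_leftc _ _)
    gcongr
    exact le_add_self.trans (ord_add_ord_le_ord_sh _ _)

theorem length_add_ord_le_ord_phiWord (d : Fin m → Series (Fin (m + 1)))
    (η : List (Fin (m + 1))) (w : Series (Fin (m + 1))) :
    η.length + ord w ≤ ord (phiWord d η w) := by
  induction η with
  | nil => simp [phiWord]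
  | cons i t ih =>
    calc ((i :: t).length : ℕ∞) + ord w = t.length + ord w + 1 := by
          rw [List.length_cons, Nat.cast_succ, add_right_comm]
      _ ≤ ord (phiWord d t w) + 1 := by gcongr
      _ ≤ ord (phiWord d (i :: t) w) := ord_phiWord_cons d i t w

theorem length_add_ordV_sub_le_ord_phiWord_sub (d e : Fin m → Series (Fin (m + 1)))
    (η : List (Fin (m + 1))) (w : Series (Fin (m + 1))) :
    η.length + ordV (d - e) ≤ ord (phiWord d η w - phiWord e η w) := by
  induction η with
  | nil =>
    rw [phiWord, phiWord, sub_self]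
    exact le_ord_iff.mpr fun _ _ => rfl
  | cons i t ih =>
    have step : ∀ (x : Fin (m + 1)) (s : Series (Fin (m + 1))),
        t.length + ordV (d - e) ≤ ord s → (i :: t).length + ordV (d - e) ≤ ord (leftc x s) :=
      fun x s hs => by
        rw [List.length_cons, Nat.cast_succ, add_right_comm]
        exact le_trans (by gcongr) (ord_add_one_le_ord_leftc x s)
    induction i using Fin.cases with
    | zero =>
      rw [phiWord, phiWord, Fin.cases_zero, Fin.cases_zero, leftc_sub]
      exact step 0 _ ih
    | succ j =>
      rw [phiWord, phiWord, Fin.cases_succ, Fin.cases_succ, leftc_sub, sh_sub_sh]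
      refine step _ _ ((le_min ?_ ?_).trans (min_ord_le_ord_add _ _))
      · rw [add_comm]
        exact le_trans (add_le_add (iInf_le _ j)
          (le_self_add.trans (length_add_ord_le_ord_phiWord d t w)))
          (ord_add_ord_le_ord_sh _ _)
      · exact ih.trans (le_add_self.trans (ord_add_ord_le_ord_sh _ _))

end Composition

theorem powE_natCast (σ : ℝ) (n : ℕ) : powE σ n = σ ^ n := by
  simp [powE]

theorem powE_add (σ : ℝ) (a b : ℕ∞) : powE σ (a + b) = powE σ a * powE σ b := by
  induction a using ENat.recTopCoe with
  | top => simp [powE]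
  | coe a =>
    induction b using ENat.recTopCoe with
    | top => simp [powE]
    | coe b => rw [← Nat.cast_add, powE_natCast, powE_natCast, powE_natCast, pow_add]

theorem powE_nonneg {σ : ℝ} (h0 : 0 ≤ σ) (n : ℕ∞) : 0 ≤ powE σ n := by
  unfold powE
  split_ifs
  exacts [le_rfl, pow_nonneg h0 _]

theorem powE_antitone {σ : ℝ} (h0 : 0 ≤ σ) (h1 : σ ≤ 1) : Antitone (powE σ) := by
  intro a b hab
  induction b using ENat.recTopCoe with
  | top => simpa [powE] using powE_nonneg h0 a
  | coe b =>
    lift a to ℕ using ne_top_of_le_ne_top (ENat.natCast_ne_top b) hab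
    rw [powE_natCast, powE_natCast]
    exact pow_le_pow_of_le_one h0 h1 (by exact_mod_cast hab)

/-- For any word `η`, `κ(η ∘̄ δ_d, η ∘̄ δ_e) ≤ σ^{|η|} κ(d, e)`.
Here `η ∘̄ δ_d = φ̄_d(η)(1)`. -/
theorem word_mix_contraction (m : ℕ) (σ : ℝ) (hσ0 : 0 < σ) (hσ1 : σ < 1)
    (η : List (Fin (m + 1))) (d e : Fin m → Series (Fin (m + 1))) :
    kappa σ (phiWord d η one) (phiWord e η one) ≤ σ ^ η.length * kappaV σ d e :=
  calc kappa σ (phiWord d η one) (phiWord e η one)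
      ≤ powE σ (η.length + ordV (d - e)) :=
        powE_antitone hσ0.le hσ1.le (length_add_ordV_sub_le_ord_phiWord_sub d e η one)
    _ = σ ^ η.length * kappaV σ d e := by rw [powE_add, powE_natCast, kappaV]

end FPS
end
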